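/- arXiv:2503.14978 — 2 statements merged into one kernel-verified Lean document; each statement's English description precedes it below -/
import Mathlib

section
/- Let Y ∼ Poisson(λ) with λ > 0 and let v be a real number with |v| ≤ 1. Then for every real x with 0 < x < 3, the moment generating function satisfies E[exp(x v (Y − λ))] ≤ exp( λ x² / (2(1 − x/3)) ). -/
/-- The Poisson(l) probability mass function. -/
noncomputable def poissonPMF (l : ℝ) (y : ℕ) : ℝ :=
  Real.exp (-l) * l ^ y / (Nat.factorial y)

lemma real_exp_tsum (t : ℝ) : Real.exp t = ∑' n : ℕ, t ^ n / n.factorial := by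
  rw [Real.exp_eq_exp_ℝ, NormedSpace.exp_eq_tsum_div]

lemma fact_ge (n : ℕ) : 2 * 3 ^ n ≤ (n + 2).factorial := by
  induction n with
  | zero => simp [Nat.factorial]
  | succ n ih =>
    have h1 : (n + 3).factorial = (n + 3) * (n + 2).factorial := rfl
    calc 2 * 3 ^ (n + 1) = 3 * (2 * 3 ^ n) := by ring
    _ ≤ 3 * (n + 2).factorial := by omega
    _ ≤ (n + 3) * (n + 2).factorial := by
        exact Nat.mul_le_mul_right _ (by omega)
    _ = (n + 3).factorial := h1.symm

lemma key_ineq (s x : ℝ) (hx0 : 0 < x) (hx3 : x < 3) (hsx : |s| ≤ x) :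
    Real.exp s - 1 - s ≤ x ^ 2 / (2 * (1 - x / 3)) := by
  have hsumm : Summable (fun n : ℕ => s ^ n / n.factorial) :=
    Real.summable_pow_div_factorial s
  have hshift : Summable (fun n : ℕ => s ^ (n + 2) / (n + 2).factorial) :=
    (summable_nat_add_iff 2).2 hsumm
  have hr0 : (0:ℝ) ≤ x / 3 := by linarith
  have hr1 : x / 3 < 1 := by linarith
  have hgsumm : Summable (fun n : ℕ => (x ^ 2 / 2) * (x / 3) ^ n) :=
    (summable_geometric_of_lt_one hr0 hr1).mul_left _
  have heq : Real.exp s - 1 - s = ∑' n : ℕ, s ^ (n + 2) / (n + 2).factorial := by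
    have h := Summable.sum_add_tsum_nat_add 2 hsumm
    rw [real_exp_tsum s, ← h]
    simp [Finset.sum_range_succ]
    ring
  have hpt : ∀ n : ℕ, s ^ (n + 2) / (n + 2).factorial ≤ (x ^ 2 / 2) * (x / 3) ^ n := by
    intro n
    have hfac : (0:ℝ) < (n + 2).factorial := by positivity
    have h1 : s ^ (n + 2) ≤ x ^ (n + 2) := by
      calc s ^ (n + 2) ≤ |s ^ (n + 2)| := le_abs_self _
      _ = |s| ^ (n + 2) := abs_pow s _
      _ ≤ x ^ (n + 2) := pow_le_pow_left₀ (abs_nonneg s) hsx _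
    have h2 : (2 * 3 ^ n : ℝ) ≤ (n + 2).factorial := by
      exact_mod_cast fact_ge n
    have h3 : x ^ (n + 2) / (n + 2).factorial ≤ x ^ (n + 2) / (2 * 3 ^ n) := by
      apply div_le_div_of_nonneg_left (by positivity) (by positivity) h2
    have h4 : x ^ (n + 2) / (2 * 3 ^ n : ℝ) = (x ^ 2 / 2) * (x / 3) ^ n := by
      rw [div_pow]
      field_simp
      ring
    calc s ^ (n + 2) / (n + 2).factorial ≤ x ^ (n + 2) / (n + 2).factorial :=
          div_le_div_of_nonneg_right h1 hfac.le
    _ ≤ x ^ (n + 2) / (2 * 3 ^ n) := h3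
    _ = (x ^ 2 / 2) * (x / 3) ^ n := h4
  have hle : (∑' n : ℕ, s ^ (n + 2) / (n + 2).factorial) ≤
      ∑' n : ℕ, (x ^ 2 / 2) * (x / 3) ^ n := Summable.tsum_le_tsum hpt hshift hgsumm
  have hgeo : (∑' n : ℕ, (x ^ 2 / 2) * (x / 3) ^ n) = x ^ 2 / (2 * (1 - x / 3)) := by
    rw [tsum_mul_left, tsum_geometric_of_lt_one hr0 hr1]
    have : (1 : ℝ) - x / 3 ≠ 0 := by linarith
    field_simp
  rw [heq]
  rw [hgeo] at hle
  exact hle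

/-- MGF bound for a centered Poisson variable: for Y ~ Poisson(λ), |v| ≤ 1 and 0 < x < 3,
E[exp(x v (Y - λ))] ≤ exp(λ x² / (2(1 - x/3))). -/
theorem poisson_mgf_bound (lam v x : ℝ) (hlam : 0 < lam) (hv : |v| ≤ 1)
    (hx0 : 0 < x) (hx3 : x < 3) :
    (∑' y : ℕ, poissonPMF lam y * Real.exp (x * v * ((y : ℝ) - lam))) ≤
      Real.exp (lam * x ^ 2 / (2 * (1 - x / 3))) := by
  set s := x * v with hs
  have hsx : |s| ≤ x := by
    rw [hs, abs_mul, abs_of_pos hx0]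
    nlinarith [abs_nonneg v]
  have hterm : ∀ y : ℕ, poissonPMF lam y * Real.exp (s * ((y : ℝ) - lam))
      = Real.exp (-lam - s * lam) * ((lam * Real.exp s) ^ y / y.factorial) := by
    intro y
    have h1 : Real.exp (s * ((y : ℝ) - lam)) = Real.exp (s * y) * Real.exp (-(s * lam)) := by
      rw [← Real.exp_add]; ring_nf
    have h2 : Real.exp (-lam - s * lam) = Real.exp (-lam) * Real.exp (-(s * lam)) := by
      rw [← Real.exp_add]; ring_nf
    have h3 : (Real.exp s) ^ y = Real.exp (s * y) := by
      rw [← Real.exp_nat_mul]; ring_nf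
    unfold poissonPMF
    rw [h1, h2, mul_pow, h3]
    ring
  have hsum1 : (∑' y : ℕ, poissonPMF lam y * Real.exp (s * ((y : ℝ) - lam)))
      = Real.exp (lam * (Real.exp s - 1 - s)) := by
    calc (∑' y : ℕ, poissonPMF lam y * Real.exp (s * ((y : ℝ) - lam)))
        = ∑' y : ℕ, Real.exp (-lam - s * lam) * ((lam * Real.exp s) ^ y / y.factorial) := by
          exact tsum_congr hterm
    _ = Real.exp (-lam - s * lam) * ∑' y : ℕ, (lam * Real.exp s) ^ y / y.factorial :=
          tsum_mul_left
    _ = Real.exp (-lam - s * lam) * Real.exp (lam * Real.exp s) := by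
          rw [← real_exp_tsum]
    _ = Real.exp (lam * (Real.exp s - 1 - s)) := by
          rw [← Real.exp_add]; ring_nf
  rw [hsum1]
  apply Real.exp_le_exp.2
  calc lam * (Real.exp s - 1 - s) ≤ lam * (x ^ 2 / (2 * (1 - x / 3))) :=
        mul_le_mul_of_nonneg_left (key_ineq s x hx0 hx3 hsx) hlam.le
  _ = lam * x ^ 2 / (2 * (1 - x / 3)) := by ring
end

section
/- Let Y₁,…,Y_K be independent with Y_i ∼ Poisson(nΛ(B_i)), set Λ̂_i = Y_i/n, and suppose Λ(𝕆) = ∑_i Λ(B_i) ≤ Λ_max and K ≤ Cn for constants Λ_max, C > 0. Then for every c' > 0 there exists t > 0 depending only on c', C, Λ_max such that for all K, n ∈ ℕ: P( ∑_{i=1}^K |Λ̂_i − Λ(B_i)| ≥ t √(K/n) ) ≤ e^{−c'K}. -/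
set_option maxHeartbeats 1000000
open MeasureTheory ProbabilityTheory


lemma exp_taylor_bound {x : ℝ} (hx : |x| ≤ 1) : Real.exp x - 1 - x ≤ x ^ 2 := by
  have h := Real.exp_bound hx (n := 2) (by norm_num)
  have h2 : ∑ i ∈ Finset.range 2, x ^ i / (Nat.factorial i) = 1 + x := by
    simp [Finset.sum_range_succ]
  rw [h2] at h
  have h3 : Real.exp x - (1 + x) ≤ |x| ^ 2 * ((2:ℕ).succ / ((Nat.factorial 2) * 2)) :=
    (le_abs_self _).trans h
  rw [sq_abs] at h3
  norm_num [Nat.factorial] at h3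
  nlinarith [sq_nonneg x]

lemma poisson_exp_moment {Ω : Type*} [MeasurableSpace Ω] (μ : Measure Ω)
    [IsProbabilityMeasure μ] (Y : Ω → ℕ) (hY : Measurable Y) (lam : ℝ) (hlam : 0 ≤ lam)
    (hpmf : ∀ k, μ {ω | Y ω = k} =
      ENNReal.ofReal (Real.exp (-lam) * lam ^ k / (Nat.factorial k))) (s : ℝ) :
    Integrable (fun ω => Real.exp (s * (Y ω : ℝ))) μ ∧
    ∫ ω, Real.exp (s * (Y ω : ℝ)) ∂μ = Real.exp (lam * (Real.exp s - 1)) := by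
  have hYm : Measurable (fun ω => (Y ω : ℝ)) := measurable_from_top.comp hY
  have hmeas : Measurable (fun ω => Real.exp (s * (Y ω : ℝ))) :=
    (measurable_const.mul hYm).exp
  have hterm : ∀ k : ℕ, Real.exp (s * k) * (Real.exp (-lam) * lam ^ k / (Nat.factorial k))
      = Real.exp (-lam) * ((lam * Real.exp s) ^ k / (Nat.factorial k)) := by
    intro k
    rw [mul_comm s (k:ℝ), Real.exp_nat_mul, mul_pow]
    ring
  have hsum : HasSum (fun k : ℕ => Real.exp (-lam) * ((lam * Real.exp s) ^ k / (Nat.factorial k)))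
      (Real.exp (lam * (Real.exp s - 1))) := by
    have h1 : HasSum (fun k : ℕ => (lam * Real.exp s) ^ k / (Nat.factorial k))
        (Real.exp (lam * Real.exp s)) := by
      have h0 := NormedSpace.expSeries_div_hasSum_exp (lam * Real.exp s)
      rwa [← Real.exp_eq_exp_ℝ] at h0
    have h2 := h1.mul_left (Real.exp (-lam))
    rwa [← Real.exp_add, show -lam + lam * Real.exp s = lam * (Real.exp s - 1) by ring] at h2
  have key : ∫⁻ ω, ENNReal.ofReal (Real.exp (s * (Y ω : ℝ))) ∂μ
      = ENNReal.ofReal (Real.exp (lam * (Real.exp s - 1))) := by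
    have hmap : ∀ k : ℕ, (μ.map Y) {k} =
        ENNReal.ofReal (Real.exp (-lam) * lam ^ k / (Nat.factorial k)) := by
      intro k
      rw [Measure.map_apply hY (measurableSet_singleton k)]
      exact hpmf k
    calc ∫⁻ ω, ENNReal.ofReal (Real.exp (s * (Y ω : ℝ))) ∂μ
        = ∫⁻ k, ENNReal.ofReal (Real.exp (s * (k : ℝ))) ∂(μ.map Y) := by
          rw [lintegral_map (by fun_prop) hY]
      _ = ∑' k : ℕ, ENNReal.ofReal (Real.exp (s * (k : ℝ))) * (μ.map Y) {k} :=
          lintegral_countable' _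
      _ = ∑' k : ℕ, ENNReal.ofReal
            (Real.exp (-lam) * ((lam * Real.exp s) ^ k / (Nat.factorial k))) := by
          refine tsum_congr fun k => ?_
          rw [hmap k, ← ENNReal.ofReal_mul (Real.exp_nonneg _), hterm k]
      _ = ENNReal.ofReal (Real.exp (lam * (Real.exp s - 1))) := by
          rw [← ENNReal.ofReal_tsum_of_nonneg (fun k => by positivity) hsum.summable,
            hsum.tsum_eq]
  have hint : Integrable (fun ω => Real.exp (s * (Y ω : ℝ))) μ := by
    refine ⟨hmeas.aestronglyMeasurable, ?_⟩
    rw [hasFiniteIntegral_iff_ofReal (Filter.Eventually.of_forall fun ω => Real.exp_nonneg _)]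
    rw [key]
    exact ENNReal.ofReal_lt_top
  refine ⟨hint, ?_⟩
  rw [integral_eq_lintegral_of_nonneg_ae (Filter.Eventually.of_forall fun ω => Real.exp_nonneg _)
    hmeas.aestronglyMeasurable, key, ENNReal.toReal_ofReal (Real.exp_nonneg _)]

/-- Concentration inequality for the ℓ₁-risk of the normalised Poisson bin counts:
if K ≤ Cn and ∑ Λ(B_i) ≤ Λ_max then for every c' > 0 there is t > 0 (depending only on
c', C, Λ_max) such that P(∑ |Y_i/n - Λ(B_i)| ≥ t√(K/n)) ≤ e^{-c'K} for all K, n. -/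
theorem poisson_l1_concentration {Ω : Type*} [MeasurableSpace Ω]
    (C Λmax : ℝ) (hC : 0 < C) (hmax : 0 < Λmax) :
    ∀ c' > (0 : ℝ), ∃ t > (0 : ℝ), ∀ (K n : ℕ), 0 < n → (K : ℝ) ≤ C * n →
      ∀ (μ : Measure Ω), IsProbabilityMeasure μ →
      ∀ (Λ : Fin K → ℝ), (∀ i, 0 ≤ Λ i) → (∑ i, Λ i) ≤ Λmax →
      ∀ (Y : Fin K → Ω → ℕ), (∀ i, Measurable (Y i)) →
        iIndepFun Y μ →
        (∀ i k, μ {ω | Y i ω = k} =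
          ENNReal.ofReal (Real.exp (-((n : ℝ) * Λ i)) * ((n : ℝ) * Λ i) ^ k /
            (Nat.factorial k))) →
        μ {ω | t * Real.sqrt ((K : ℝ) / n) ≤ ∑ i, |(Y i ω : ℝ) / n - Λ i|} ≤
          ENNReal.ofReal (Real.exp (-c' * K)) := by
  intro c' hc'
  set t : ℝ := max (2 * Real.sqrt C * (c' + 1)) (2 * Real.sqrt (Λmax * (c' + 1))) with ht_def
  have hc1 : (0:ℝ) < c' + 1 := by linarith
  have ht : 0 < t := lt_max_of_lt_right (by positivity)
  refine ⟨t, ht, ?_⟩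
  intro K n hn hKn μ hμ Λ hΛ0 hΛmax Y hYmeas hindep hpmf
  have hn0 : (0:ℝ) < n := by exact_mod_cast hn
  have hK0 : (0:ℝ) ≤ K := Nat.cast_nonneg K
  set z : ℝ := t * Real.sqrt ((K : ℝ) / n) with hz_def
  have hz0 : 0 ≤ z := by positivity
  set θ : ℝ := min (n:ℝ) (z * n / (2 * Λmax)) with hθ_def
  have hθ0 : 0 ≤ θ := le_min hn0.le (by positivity)
  have hθn : θ ≤ n := min_le_left _ _
  have hθ2 : θ ≤ z * n / (2 * Λmax) := min_le_right _ _
  -- the sign-decomposed random variables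
  set Xf : (Fin K → Bool) → Fin K → Ω → ℝ :=
    fun ε i => (fun k : ℕ => (if ε i then (1:ℝ) else -1) * ((k:ℝ)/n - Λ i)) ∘ Y i with hXf_def
  -- inclusion into the union over sign vectors
  have hincl : {ω | z ≤ ∑ i, |(Y i ω : ℝ) / n - Λ i|} ⊆
      ⋃ ε : Fin K → Bool, {ω | z ≤ (∑ i, Xf ε i) ω} := by
    intro ω hω
    refine Set.mem_iUnion.2 ⟨fun i => decide (0 ≤ (Y i ω : ℝ) / n - Λ i), ?_⟩
    have : ∑ i, Xf (fun i => decide (0 ≤ (Y i ω : ℝ) / n - Λ i)) i ω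
        = ∑ i, |(Y i ω : ℝ) / n - Λ i| := by
      refine Finset.sum_congr rfl fun i _ => ?_
      simp only [hXf_def, Function.comp_apply]
      by_cases h : 0 ≤ (Y i ω : ℝ) / n - Λ i
      · simp [h, abs_of_nonneg h]
      · simp [h, abs_of_neg (not_le.1 h)]
    simp only [Set.mem_setOf_eq, Finset.sum_apply]
    rw [this]
    exact hω
  -- per-sign Chernoff bound
  have hsign : ∀ ε : Fin K → Bool,
      μ {ω | z ≤ (∑ i, Xf ε i) ω} ≤ ENNReal.ofReal (Real.exp (-(c'+1) * K)) := by
    intro ε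
    have hXmeas : ∀ i, Measurable (Xf ε i) :=
      fun i => measurable_from_top.comp (hYmeas i)
    have hindep' : iIndepFun (Xf ε) μ :=
      hindep.comp _ (fun i => measurable_from_top)
    -- per-coordinate exponential moment
    have hcoord : ∀ i : Fin K,
        Integrable (fun ω => Real.exp (θ * Xf ε i ω)) μ ∧
        mgf (Xf ε i) μ θ ≤ Real.exp (Λ i * θ^2 / n) := by
      intro i
      set e : ℝ := if ε i then (1:ℝ) else -1 with he_def
      have he2 : e^2 = 1 := by rw [he_def]; split <;> norm_num
      have heabs : |e| = 1 := by rw [he_def]; split <;> norm_num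
      set s : ℝ := θ * e / n with hs_def
      have hmom := poisson_exp_moment μ (Y i) (hYmeas i) ((n:ℝ) * Λ i)
        (mul_nonneg hn0.le (hΛ0 i)) (hpmf i) s
      have hfun : ∀ ω, Real.exp (θ * Xf ε i ω)
          = Real.exp (s * (Y i ω : ℝ)) * Real.exp (-(θ * e * Λ i)) := by
        intro ω
        rw [← Real.exp_add]
        congr 1
        simp only [hXf_def, Function.comp_apply, ← he_def, hs_def]
        field_simp
        ring
      have hint : Integrable (fun ω => Real.exp (θ * Xf ε i ω)) μ :=
        (hmom.1.mul_const _).congr (Filter.Eventually.of_forall fun ω => (hfun ω).symm)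
      refine ⟨hint, ?_⟩
      have hmgf_eq : mgf (Xf ε i) μ θ
          = Real.exp ((n:ℝ) * Λ i * (Real.exp s - 1 - s)) := by
        rw [mgf]
        calc ∫ ω, Real.exp (θ * Xf ε i ω) ∂μ
            = ∫ ω, Real.exp (s * (Y i ω : ℝ)) * Real.exp (-(θ * e * Λ i)) ∂μ :=
              integral_congr_ae (Filter.Eventually.of_forall hfun)
          _ = (∫ ω, Real.exp (s * (Y i ω : ℝ)) ∂μ) * Real.exp (-(θ * e * Λ i)) :=
              integral_mul_const _ _
          _ = Real.exp ((n:ℝ) * Λ i * (Real.exp s - 1)) * Real.exp (-(θ * e * Λ i)) := by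
              rw [hmom.2]
          _ = Real.exp ((n:ℝ) * Λ i * (Real.exp s - 1 - s)) := by
              rw [← Real.exp_add]
              congr 1
              simp only [hs_def]
              field_simp
              ring
      rw [hmgf_eq]
      apply Real.exp_le_exp.2
      have hsabs : |s| ≤ 1 := by
        rw [hs_def, abs_div, abs_mul, heabs, mul_one, abs_of_nonneg hθ0,
          abs_of_nonneg hn0.le, div_le_one hn0]
        exact hθn
      have hs2 : s^2 = θ^2 / n^2 := by
        rw [hs_def, div_pow, mul_pow, he2, mul_one]
      have := exp_taylor_bound hsabs
      calc (n:ℝ) * Λ i * (Real.exp s - 1 - s) ≤ (n:ℝ) * Λ i * s^2 := by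
            exact mul_le_mul_of_nonneg_left this (mul_nonneg hn0.le (hΛ0 i))
        _ = Λ i * θ^2 / n := by rw [hs2]; field_simp
    -- Chernoff
    have hint_sum : Integrable (fun ω => Real.exp (θ * (∑ i, Xf ε i) ω)) μ :=
      hindep'.integrable_exp_mul_sum hXmeas (fun i _ => (hcoord i).1)
    have hcher := measure_ge_le_exp_mul_mgf (X := ∑ i, Xf ε i) (μ := μ) z hθ0 hint_sum
    rw [hindep'.mgf_sum hXmeas Finset.univ] at hcher
    have hprod : ∏ i, mgf (Xf ε i) μ θ ≤ Real.exp (Λmax * θ^2 / n) := by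
      calc ∏ i, mgf (Xf ε i) μ θ ≤ ∏ i, Real.exp (Λ i * θ^2 / n) :=
            Finset.prod_le_prod (fun i _ => mgf_nonneg) (fun i _ => (hcoord i).2)
        _ = Real.exp (∑ i, Λ i * θ^2 / n) := (Real.exp_sum _ _).symm
        _ ≤ Real.exp (Λmax * θ^2 / n) := by
            apply Real.exp_le_exp.2
            have : ∑ i, Λ i * θ^2 / n = (∑ i, Λ i) * (θ^2 / n) := by
              rw [Finset.sum_mul]; refine Finset.sum_congr rfl fun i _ => by ring
            rw [this, mul_div_assoc]
            exact mul_le_mul_of_nonneg_right hΛmax (by positivity)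
    -- arithmetic: exponent bound
    have key1 : Λmax * θ^2 / n ≤ θ * z / 2 := by
      rw [le_div_iff₀ (by positivity : (0:ℝ) < 2 * Λmax)] at hθ2
      rw [div_le_div_iff₀ hn0 (by norm_num : (0:ℝ) < 2)]
      nlinarith [mul_le_mul_of_nonneg_left hθ2 hθ0]
    have key2 : (c'+1) * K ≤ θ * z / 2 := by
      have hsqrtKn : (K:ℝ) ≤ Real.sqrt C * Real.sqrt ((K:ℝ) * n) := by
        have hKK : (K:ℝ)^2 ≤ C * ((K:ℝ) * n) := by nlinarith
        calc (K:ℝ) = Real.sqrt ((K:ℝ)^2) := (Real.sqrt_sq hK0).symm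
          _ ≤ Real.sqrt (C * ((K:ℝ) * n)) := Real.sqrt_le_sqrt hKK
          _ = Real.sqrt C * Real.sqrt ((K:ℝ) * n) := Real.sqrt_mul hC.le _
      have hnz : Real.sqrt ((K:ℝ)/n) * n = Real.sqrt ((K:ℝ) * n) := by
        rw [show (n:ℝ) = Real.sqrt ((n:ℝ)^2) from (Real.sqrt_sq hn0.le).symm,
          ← Real.sqrt_mul (by positivity)]
        congr 1
        field_simp
        rw [Real.sq_sqrt (sq_nonneg _)]
      have hz2 : z^2 * n = t^2 * K := by
        rw [hz_def, mul_pow, Real.sq_sqrt (by positivity)]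
        field_simp
      rw [hθ_def, min_mul_of_nonneg _ _ hz0]
      rcases le_total ((n:ℝ) * z) (z * n / (2 * Λmax) * z) with h | h
      · rw [min_eq_left h]
        have hnz2 : (n:ℝ) * z = t * Real.sqrt ((K:ℝ) * n) := by
          rw [hz_def, ← hnz]; ring
        have htC : 2 * Real.sqrt C * (c' + 1) ≤ t := le_max_left _ _
        have hsq : 0 ≤ Real.sqrt ((K:ℝ) * n) := Real.sqrt_nonneg _
        have hsC : 0 ≤ Real.sqrt C := Real.sqrt_nonneg _
        rw [hnz2]
        nlinarith [mul_le_mul_of_nonneg_right htC hsq,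
          mul_le_mul_of_nonneg_left hsqrtKn hc1.le]
      · rw [min_eq_right h]
        have htL : 2 * Real.sqrt (Λmax * (c' + 1)) ≤ t := le_max_right _ _
        have ht2 : 4 * (Λmax * (c' + 1)) ≤ t^2 := by
          nlinarith [Real.sq_sqrt (by positivity : (0:ℝ) ≤ Λmax * (c' + 1)),
            Real.sqrt_nonneg (Λmax * (c' + 1))]
        have : z * n / (2 * Λmax) * z = t^2 * K / (2 * Λmax) := by
          rw [div_mul_eq_mul_div, show z * n * z = z^2 * n by ring, hz2]
        rw [this, div_div, le_div_iff₀ (by positivity)]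
        nlinarith [mul_le_mul_of_nonneg_right ht2 hK0]
    have hfinal : Real.exp (-θ * z) * Real.exp (Λmax * θ^2 / n)
        ≤ Real.exp (-(c'+1) * K) := by
      rw [← Real.exp_add]
      apply Real.exp_le_exp.2
      nlinarith
    have hto : (μ {ω | z ≤ (∑ i, Xf ε i) ω}).toReal ≤ Real.exp (-(c'+1) * K) :=
      hcher.trans ((mul_le_mul_of_nonneg_left hprod (Real.exp_nonneg _)).trans hfinal)
    exact (ENNReal.le_ofReal_iff_toReal_le (measure_ne_top μ _) (Real.exp_nonneg _)).2 hto
  -- union bound and final count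
  calc μ {ω | z ≤ ∑ i, |(Y i ω : ℝ) / n - Λ i|}
      ≤ μ (⋃ ε : Fin K → Bool, {ω | z ≤ (∑ i, Xf ε i) ω}) := measure_mono hincl
    _ ≤ ∑ ε : Fin K → Bool, μ {ω | z ≤ (∑ i, Xf ε i) ω} := measure_iUnion_fintype_le _ _
    _ ≤ ∑ _ε : Fin K → Bool, ENNReal.ofReal (Real.exp (-(c'+1) * K)) :=
        Finset.sum_le_sum fun ε _ => hsign ε
    _ = (2^K : ℕ) • ENNReal.ofReal (Real.exp (-(c'+1) * K)) := by
        rw [Finset.sum_const, Finset.card_univ, Fintype.card_fun]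
        simp
    _ ≤ ENNReal.ofReal (Real.exp (-c' * K)) := by
        rw [nsmul_eq_mul, ← ENNReal.ofReal_natCast,
          ← ENNReal.ofReal_mul (by positivity)]
        apply ENNReal.ofReal_le_ofReal
        push_cast
        have h2K : (2:ℝ)^K = Real.exp ((K:ℝ) * Real.log 2) := by
          rw [Real.exp_nat_mul, Real.exp_log (by norm_num : (0:ℝ) < 2)]
        rw [h2K, ← Real.exp_add]
        apply Real.exp_le_exp.2
        have hlog2 : Real.log 2 < 1 := by
          have := Real.log_two_lt_d9
          linarith
        nlinarith
end
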